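/- arXiv:2402.06369 — 6 statements merged into one kernel-verified Lean document; each statement's English description precedes it below -/
import Mathlib

section
/- Let X be a real Banach space, θ = (k_r) a lacunary sequence, (x_k) a sequence in X and L ∈ X. If (x_k) is N_θ-summable to L, then (x_k) is lacunary statistically convergent (S_θ-convergent) to L. -/
open Filter Finset
open scoped Classical

/-- `θ` is a lacunary sequence: `θ 0 = 0`, `θ` is strictly increasing and
`h_r = θ (r+1) - θ r → ∞`.  (Intervals `I_r = (θ r, θ (r+1)]`.) -/
def IsLacunary (θ : ℕ → ℕ) : Prop :=
  θ 0 = 0 ∧ StrictMono θ ∧ Tendsto (fun r => θ (r + 1) - θ r) atTop atTop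

/-- `x` is strongly lacunary (`N_θ`) summable to `L`. -/
def NthetaSummable {X : Type*} [NormedAddCommGroup X] (θ : ℕ → ℕ) (x : ℕ → X) (L : X) : Prop :=
  Tendsto (fun r => (1 / (θ (r + 1) - θ r : ℝ)) * ∑ k ∈ Finset.Ioc (θ r) (θ (r + 1)), ‖x k - L‖)
    atTop (nhds 0)

/-- `x` is lacunary statistically (`S_θ`) convergent to `L`. -/
def SthetaConvergent {X : Type*} [NormedAddCommGroup X] (θ : ℕ → ℕ) (x : ℕ → X) (L : X) : Prop :=
  ∀ ε > (0 : ℝ),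
    Tendsto (fun r => (1 / (θ (r + 1) - θ r : ℝ)) *
      (((Finset.Ioc (θ r) (θ (r + 1))).filter (fun k => ε ≤ ‖x k - L‖)).card : ℝ))
      atTop (nhds 0)

open Topology

/-! Markov's inequality on each block: `ε · #{k ∈ I_r : ‖x_k - L‖ ≥ ε} ≤ ∑_{k ∈ I_r} ‖x_k - L‖`.
Dividing by `h_r` bounds the `S_θ`-densities by `1/ε` times the `N_θ`-means. -/

theorem Finset.mul_card_filter_le_sum {ι R : Type*} [Semiring R] [PartialOrder R]
    [IsOrderedRing R] (s : Finset ι) (f : ι → R) (hf : ∀ i ∈ s, 0 ≤ f i) (ε : R) :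
    ε * #{i ∈ s | ε ≤ f i} ≤ ∑ i ∈ s, f i :=
  calc ε * #{i ∈ s | ε ≤ f i} = #{i ∈ s | ε ≤ f i} • ε := (nsmul_eq_mul' ε _).symm
    _ ≤ ∑ i ∈ s with ε ≤ f i, f i := card_nsmul_le_sum _ _ _ fun _ hi => (mem_filter.mp hi).2
    _ ≤ ∑ i ∈ s, f i := sum_le_sum_of_subset_of_nonneg (filter_subset _ _) fun i hi _ => hf i hi

theorem tendsto_mul_zero_of_const_mul_le {ι : Type*} {l : Filter ι} {c a b : ι → ℝ} {ε : ℝ}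
    (hε : 0 < ε) (hb : ∀ i, 0 ≤ b i) (hba : ∀ i, ε * b i ≤ a i)
    (ha : Tendsto (fun i => c i * a i) l (𝓝 0)) : Tendsto (fun i => c i * b i) l (𝓝 0) := by
  refine squeeze_zero_norm (fun i => ?_) (by simpa using ha.norm.div_const ε)
  have ha_nonneg : 0 ≤ a i := (mul_nonneg hε.le (hb i)).trans (hba i)
  rw [norm_mul, Real.norm_of_nonneg (hb i), Real.norm_eq_abs, abs_of_nonneg ha_nonneg,
    le_div_iff₀ hε, mul_right_comm, mul_assoc]
  exact mul_le_mul_of_nonneg_left (hba i) (abs_nonneg _)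

theorem nthetaSummable_imp_sthetaConvergent_general {X : Type*} [NormedAddCommGroup X]
    (θ : ℕ → ℕ) (x : ℕ → X) (L : X)
    (hx : NthetaSummable θ x L) : SthetaConvergent θ x L := fun ε hε =>
  tendsto_mul_zero_of_const_mul_le hε (fun _ => Nat.cast_nonneg _)
    (fun _ => mul_card_filter_le_sum _ _ (fun k _ => norm_nonneg (x k - L)) ε) hx

/-- `N_θ`-summability implies `S_θ`-convergence. -/
theorem nthetaSummable_imp_sthetaConvergent {X : Type*} [NormedAddCommGroup X] [NormedSpace ℝ X]
    [CompleteSpace X] (θ : ℕ → ℕ) (hθ : IsLacunary θ) (x : ℕ → X) (L : X)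
    (hx : NthetaSummable θ x L) : SthetaConvergent θ x L :=
  nthetaSummable_imp_sthetaConvergent_general θ x L hx
end

section
/- Let X be a real Banach space, θ = (k_r) a lacunary sequence, (x_k) a bounded sequence in X and L ∈ X. If (x_k) is lacunary statistically convergent (S_θ-convergent) to L, then (x_k) is N_θ-summable to L. -/
open Filter Finset
open scoped Classical

/-! Split each block `I_r` into the indices where `‖x_k - L‖ ≥ ε` and the rest. On the first part
the terms are bounded by `C = M + ‖L‖`, and the part has density tending to `0`; on the rest the
terms are below `ε`. So the block averages of `‖x_k - L‖` are eventually at most `2ε`. -/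

theorem Finset.sum_le_mul_card_filter_add_mul_card {ι : Type*} (s : Finset ι) (f : ι → ℝ)
    {C ε : ℝ} (hC : ∀ i ∈ s, f i ≤ C) (hε : 0 ≤ ε) :
    ∑ i ∈ s, f i ≤ C * #(s.filter (fun i => ε ≤ f i)) + ε * #s := by
  rw [← sum_filter_add_sum_filter_not s (fun i => ε ≤ f i)]
  have h_large : ∑ i ∈ s.filter (fun i => ε ≤ f i), f i ≤ C * #(s.filter (fun i => ε ≤ f i)) := by
    simpa [mul_comm] using sum_le_card_nsmul _ f C fun i hi => hC i (mem_filter.1 hi).1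
  have h_small : ∑ i ∈ s.filter (fun i => ¬ ε ≤ f i), f i ≤ ε * #s :=
    calc ∑ i ∈ s.filter (fun i => ¬ ε ≤ f i), f i
        ≤ ε * #(s.filter (fun i => ¬ ε ≤ f i)) := by
          simpa [mul_comm] using
            sum_le_card_nsmul _ f ε fun i hi => (not_le.1 (mem_filter.1 hi).2).le
      _ ≤ ε * #s := by gcongr; exact filter_subset _ _
  linarith

-- No monotonicity is needed: for `b < a` the block `Ioc a b` is empty while `(b - a : ℝ) < 0`.
theorem blockAverage_nonneg {a b : ℕ} (f : ℕ → ℝ) (hf : ∀ k ∈ Ioc a b, 0 ≤ f k) :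
    0 ≤ (1 / ((b : ℝ) - a)) * ∑ k ∈ Ioc a b, f k := by
  rcases le_or_gt a b with hab | hba
  · exact mul_nonneg (one_div_nonneg.2 (sub_nonneg.2 (by exact_mod_cast hab))) (sum_nonneg hf)
  · simp [Ioc_eq_empty_of_le hba.le]

theorem blockAverage_le_mul_density_add {a b : ℕ} (f : ℕ → ℝ) {C ε : ℝ}
    (hC : ∀ k ∈ Ioc a b, f k ≤ C) (hε : 0 ≤ ε) :
    (1 / ((b : ℝ) - a)) * ∑ k ∈ Ioc a b, f k ≤
      C * ((1 / ((b : ℝ) - a)) * #((Ioc a b).filter (fun k => ε ≤ f k))) + ε := by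
  rcases lt_or_ge a b with hab | hba
  · have hlen : (0 : ℝ) < (b : ℝ) - a := sub_pos.2 (by exact_mod_cast hab)
    have hcard : (#(Ioc a b) : ℝ) = (b : ℝ) - a := by
      rw [Nat.card_Ioc, Nat.cast_sub hab.le]
    have hsum := (Ioc a b).sum_le_mul_card_filter_add_mul_card f hC hε
    rw [hcard] at hsum
    rw [one_div, inv_mul_le_iff₀ hlen]
    calc ∑ k ∈ Ioc a b, f k ≤ C * #((Ioc a b).filter (fun k => ε ≤ f k)) + ε * ((b : ℝ) - a) :=
          hsum
      _ = ((b : ℝ) - a) * (C * (((b : ℝ) - a)⁻¹ * #((Ioc a b).filter (fun k => ε ≤ f k))) + ε) :=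
          by field_simp
  · simp [Ioc_eq_empty_of_le hba, hε]

theorem sthetaConvergent_imp_nthetaSummable_of_bounded_general {X : Type*} [NormedAddCommGroup X]
    (θ : ℕ → ℕ) (x : ℕ → X) (L : X)
    (hbdd : ∃ M > (0 : ℝ), ∀ k, ‖x k‖ ≤ M)
    (hx : SthetaConvergent θ x L) : NthetaSummable θ x L := by
  obtain ⟨M, -, hM⟩ := hbdd
  have hbound : ∀ k, ‖x k - L‖ ≤ M + ‖L‖ := fun k =>
    (norm_sub_le _ _).trans (add_le_add_left (hM k) _)
  refine tendsto_order.2 ⟨fun δ hδ => Eventually.of_forall fun r => hδ.trans_le ?_,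
    fun δ hδ => ?_⟩
  · exact blockAverage_nonneg _ fun k _ => norm_nonneg _
  have hε : (0 : ℝ) < δ / 2 := half_pos hδ
  have hdom : Tendsto (fun r => (M + ‖L‖) * ((1 / ((θ (r + 1) : ℝ) - θ r)) *
      #((Ioc (θ r) (θ (r + 1))).filter (fun k => δ / 2 ≤ ‖x k - L‖))) + δ / 2)
      atTop (nhds (δ / 2)) := by
    simpa using ((hx (δ / 2) hε).const_mul (M + ‖L‖)).add_const (δ / 2)
  filter_upwards [hdom.eventually (gt_mem_nhds (half_lt_self hδ))] with r hr
  exact (blockAverage_le_mul_density_add _ (fun k _ => hbound k) hε.le).trans_lt hr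

/-- For bounded sequences, `S_θ`-convergence implies `N_θ`-summability. -/
theorem sthetaConvergent_imp_nthetaSummable_of_bounded {X : Type*} [NormedAddCommGroup X]
    [NormedSpace ℝ X] [CompleteSpace X] (θ : ℕ → ℕ) (hθ : IsLacunary θ) (x : ℕ → X) (L : X)
    (hbdd : ∃ M > (0 : ℝ), ∀ k, ‖x k‖ ≤ M)
    (hx : SthetaConvergent θ x L) : NthetaSummable θ x L :=
  sthetaConvergent_imp_nthetaSummable_of_bounded_general θ x L hbdd hx
end

section
/- Let X be a real Banach space and θ = (k_r) a lacunary sequence. If a sequence (x_k) in X is lacunary statistically convergent (S_θ-convergent) to some L ∈ X, then (x_k) is lacunary statistically Cauchy (S_θ-Cauchy): there exists a selection of indices k'(r) ∈ I_r for every r ∈ ℕ such that lim_{r→∞} x_{k'(r)} = L in norm for some L ∈ X, and for every ε > 0, lim_{r→∞} (1/h_r)|{k ∈ I_r : ‖x_k − x_{k'(r)}‖ ≥ ε}| = 0. -/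
open Filter Finset
open scoped Classical

/-- `x` is lacunary statistically (`S_θ`) Cauchy. -/
def SthetaCauchy {X : Type*} [NormedAddCommGroup X] (θ : ℕ → ℕ) (x : ℕ → X) : Prop :=
  ∃ (k : ℕ → ℕ) (L : X), (∀ r, k r ∈ Finset.Ioc (θ r) (θ (r + 1))) ∧
    Tendsto (fun r => x (k r)) atTop (nhds L) ∧
    ∀ ε > (0 : ℝ),
      Tendsto (fun r => (1 / (θ (r + 1) - θ r : ℝ)) *
        (((Finset.Ioc (θ r) (θ (r + 1))).filter (fun j => ε ≤ ‖x j - x (k r)‖)).card : ℝ))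
        atTop (nhds 0)

open Topology

/-!
In each block `I_r` select an index `k r` minimizing `‖x j - L‖`. Eventually the exceptional set
`{j ∈ I_r : ε ≤ ‖x j - L‖}` has density below `1`, so it misses a point of `I_r`; hence the minimizer
satisfies `‖x (k r) - L‖ < ε`, i.e. `x ∘ k → L`. Once `‖x (k r) - L‖ < ε / 2`, the triangle inequality
turns `ε ≤ ‖x j - x (k r)‖` into `ε / 2 ≤ ‖x j - L‖`, so the Cauchy densities are dominated by the
`S_θ`-densities at `ε / 2`.
-/

/-- `SthetaConvergent θ x L` is definitionally
`∀ ε > 0, Tendsto (blockDensity θ (fun k => ε ≤ ‖x k - L‖)) atTop (𝓝 0)`. -/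
noncomputable def blockDensity (θ : ℕ → ℕ) (p : ℕ → Prop) (r : ℕ) : ℝ :=
  (1 / (θ (r + 1) - θ r : ℝ)) * ((Ioc (θ r) (θ (r + 1))).filter p).card

section BlockDensity

variable {θ : ℕ → ℕ}

lemma blockDensity_nonneg (hθ : Monotone θ) (p : ℕ → Prop) (r : ℕ) :
    0 ≤ blockDensity θ p r := by
  have hle : (θ r : ℝ) ≤ θ (r + 1) := by exact_mod_cast hθ r.le_succ
  exact mul_nonneg (one_div_nonneg.2 (sub_nonneg.2 hle)) (Nat.cast_nonneg _)

lemma blockDensity_mono (hθ : Monotone θ) {p q : ℕ → Prop} (hpq : ∀ k, p k → q k) (r : ℕ) :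
    blockDensity θ p r ≤ blockDensity θ q r := by
  have hle : (θ r : ℝ) ≤ θ (r + 1) := by exact_mod_cast hθ r.le_succ
  unfold blockDensity
  gcongr with k
  exact hpq k

lemma exists_not_of_blockDensity_lt_one (hθ : StrictMono θ) {p : ℕ → Prop} {r : ℕ}
    (h : blockDensity θ p r < 1) : ∃ k ∈ Ioc (θ r) (θ (r + 1)), ¬ p k := by
  by_contra! hall
  have hlt : θ r < θ (r + 1) := hθ r.lt_succ_self
  have hpos : (0 : ℝ) < θ (r + 1) - θ r := sub_pos.2 (by exact_mod_cast hlt)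
  unfold blockDensity at h
  rw [filter_true_of_mem hall, Nat.card_Ioc, Nat.cast_sub hlt.le,
    one_div_mul_cancel hpos.ne'] at h
  exact lt_irrefl _ h

lemma blockDensity_norm_sub_le_of_norm_sub_lt {X : Type*} [SeminormedAddCommGroup X]
    (hθ : Monotone θ) {x : ℕ → X} {L y : X} {ε : ℝ}
    (hy : ‖y - L‖ < ε / 2) (r : ℕ) :
    blockDensity θ (fun j => ε ≤ ‖x j - y‖) r ≤ blockDensity θ (fun j => ε / 2 ≤ ‖x j - L‖) r :=
  blockDensity_mono hθ (fun j hj => by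
    linarith [norm_sub_le_norm_sub_add_norm_sub (x j) L y, norm_sub_rev y L]) r

end BlockDensity

section SthetaConvergent

variable {θ : ℕ → ℕ} {X : Type*} [NormedAddCommGroup X] {x : ℕ → X} {L : X}

lemma SthetaConvergent.eventually_exists_norm_sub_lt (hL : SthetaConvergent θ x L)
    (hθ : StrictMono θ) {ε : ℝ} (hε : 0 < ε) :
    ∀ᶠ r in atTop, ∃ j ∈ Ioc (θ r) (θ (r + 1)), ‖x j - L‖ < ε := by
  filter_upwards [(hL ε hε).eventually_lt_const one_pos] with r hr
  simpa only [not_le] using exists_not_of_blockDensity_lt_one hθ hr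

lemma SthetaConvergent.tendsto_comp_of_forall_norm_sub_le (hL : SthetaConvergent θ x L)
    (hθ : StrictMono θ) {k : ℕ → ℕ}
    (hk : ∀ r, ∀ j ∈ Ioc (θ r) (θ (r + 1)), ‖x (k r) - L‖ ≤ ‖x j - L‖) :
    Tendsto (fun r => x (k r)) atTop (𝓝 L) := by
  refine Metric.tendsto_nhds.2 fun ε hε => ?_
  filter_upwards [hL.eventually_exists_norm_sub_lt hθ hε] with r ⟨j, hj, hjε⟩
  rw [dist_eq_norm]
  exact (hk r j hj).trans_lt hjε

lemma SthetaConvergent.tendsto_blockDensity_norm_sub_comp (hL : SthetaConvergent θ x L)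
    (hθ : Monotone θ) {k : ℕ → ℕ} (hk : Tendsto (fun r => x (k r)) atTop (𝓝 L))
    {ε : ℝ} (hε : 0 < ε) :
    Tendsto (fun r => blockDensity θ (fun j => ε ≤ ‖x j - x (k r)‖) r) atTop (𝓝 0) := by
  have hnear : ∀ᶠ r in atTop, ‖x (k r) - L‖ < ε / 2 := by
    simpa only [dist_eq_norm] using Metric.tendsto_nhds.1 hk (ε / 2) (half_pos hε)
  refine squeeze_zero' (Eventually.of_forall fun r => blockDensity_nonneg hθ _ r) ?_
    (hL (ε / 2) (half_pos hε))
  filter_upwards [hnear] with r hr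
  exact blockDensity_norm_sub_le_of_norm_sub_lt hθ hr r

end SthetaConvergent

theorem sthetaConvergent_imp_sthetaCauchy_general {X : Type*} [NormedAddCommGroup X]
    (θ : ℕ → ℕ) (hθ : IsLacunary θ) (x : ℕ → X)
    (hx : ∃ L : X, SthetaConvergent θ x L) : SthetaCauchy θ x := by
  obtain ⟨L, hL⟩ := hx
  have hmono : StrictMono θ := hθ.2.1
  choose k hk hkmin using fun r : ℕ =>
    exists_min_image _ (fun j => ‖x j - L‖) (nonempty_Ioc.2 (hmono r.lt_succ_self))
  have hkL := hL.tendsto_comp_of_forall_norm_sub_le hmono hkmin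
  exact ⟨k, L, hk, hkL, fun ε hε => hL.tendsto_blockDensity_norm_sub_comp hmono.monotone hkL hε⟩

/-- An `S_θ`-convergent sequence is `S_θ`-Cauchy. -/
theorem sthetaConvergent_imp_sthetaCauchy {X : Type*} [NormedAddCommGroup X] [NormedSpace ℝ X]
    [CompleteSpace X] (θ : ℕ → ℕ) (hθ : IsLacunary θ) (x : ℕ → X)
    (hx : ∃ L : X, SthetaConvergent θ x L) : SthetaCauchy θ x :=
  sthetaConvergent_imp_sthetaCauchy_general θ hθ x hx
end

section
/- Let X be a real Banach space and θ = (k_r) a lacunary sequence. If a sequence (x_k) in X is lacunary statistically Cauchy, i.e. there exists a selection of indices k'(r) ∈ I_r for every r ∈ ℕ such that lim_{r→∞} x_{k'(r)} = L in norm for some L ∈ X, and for every ε > 0, lim_{r→∞} (1/h_r)|{k ∈ I_r : ‖x_k − x_{k'(r)}‖ ≥ ε}| = 0, then (x_k) is lacunary statistically convergent (S_θ-convergent) to L. -/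
open Filter Finset
open scoped Classical

theorem tendsto_mul_natCast_zero_of_eventually_le {α : Type*} {l : Filter α} {c : α → ℝ}
    {m n : α → ℕ} (hle : ∀ᶠ a in l, n a ≤ m a) (h : Tendsto (fun a => c a * m a) l (nhds 0)) :
    Tendsto (fun a => c a * n a) l (nhds 0) := by
  refine squeeze_zero_norm' (a := fun a => ‖c a * m a‖) ?_ (by simpa only [norm_zero] using h.norm)
  filter_upwards [hle] with a ha
  rw [norm_mul, norm_mul, Real.norm_natCast, Real.norm_natCast]
  exact mul_le_mul_of_nonneg_left (by exact_mod_cast ha) (norm_nonneg _)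

theorem card_filter_le_norm_sub_le {ι E : Type*} [SeminormedAddCommGroup E] (s : Finset ι)
    (f : ι → E) {a b : E} {ε : ℝ} (h : ‖b - a‖ < ε / 2) :
    #(s.filter fun j => ε ≤ ‖f j - a‖) ≤ #(s.filter fun j => ε / 2 ≤ ‖f j - b‖) :=
  card_le_card <| monotone_filter_right s fun j _ hj => by
    linarith [norm_sub_le_norm_sub_add_norm_sub (f j) b a]

theorem sthetaCauchy_imp_sthetaConvergent_general {X : Type*} [NormedAddCommGroup X]
    (θ : ℕ → ℕ) (x : ℕ → X) (k : ℕ → ℕ) (L : X)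
    (hlim : Tendsto (fun r => x (k r)) atTop (nhds L))
    (hcauchy : ∀ ε > (0 : ℝ),
      Tendsto (fun r => (1 / (θ (r + 1) - θ r : ℝ)) *
        (((Finset.Ioc (θ r) (θ (r + 1))).filter (fun j => ε ≤ ‖x j - x (k r)‖)).card : ℝ))
        atTop (nhds 0)) :
    SthetaConvergent θ x L := by
  intro ε hε
  have hnear : ∀ᶠ r in atTop, ‖x (k r) - L‖ < ε / 2 := by
    simpa only [dist_eq_norm] using hlim.eventually (Metric.ball_mem_nhds L (half_pos hε))
  exact tendsto_mul_natCast_zero_of_eventually_le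
    (hnear.mono fun r hr => card_filter_le_norm_sub_le _ _ hr) (hcauchy _ (half_pos hε))

/-- An `S_θ`-Cauchy sequence is `S_θ`-convergent (to the limit of the selected subsequence). -/
theorem sthetaCauchy_imp_sthetaConvergent {X : Type*} [NormedAddCommGroup X] [NormedSpace ℝ X]
    [CompleteSpace X] (θ : ℕ → ℕ) (hθ : IsLacunary θ) (x : ℕ → X) (k : ℕ → ℕ) (L : X)
    (hk : ∀ r, k r ∈ Finset.Ioc (θ r) (θ (r + 1)))
    (hlim : Tendsto (fun r => x (k r)) atTop (nhds L))
    (hcauchy : ∀ ε > (0 : ℝ),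
      Tendsto (fun r => (1 / (θ (r + 1) - θ r : ℝ)) *
        (((Finset.Ioc (θ r) (θ (r + 1))).filter (fun j => ε ≤ ‖x j - x (k r)‖)).card : ℝ))
        atTop (nhds 0)) :
    SthetaConvergent θ x L :=
  sthetaCauchy_imp_sthetaConvergent_general θ x k L hlim hcauchy
end

section
/- Let X be a real Banach space, θ = (k_r) a lacunary sequence, and ∑ x_i a series in X. the following are equivalent: (1) ∑ x_i is weakly unconditionally Cauchy; (2) the space S_{N_θ}(∑ x_i) = {(a_i) ∈ ℓ_∞ : the partial sums of ∑ a_i x_i are N_θ-summable}, endowed with the supremum norm, is complete; (3) c_0 ⊆ S_{N_θ}(∑ x_i), i.e. for every sequence (a_i) of reals converging to 0, the sequence of partial sums S_k = ∑_{i=1}^k a_i x_i is N_θ-summable to some L ∈ X. -/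
open Filter Finset
open scoped Classical

/-- The series `∑ x i` is weakly unconditionally Cauchy: `∑ |f (x i)| < ∞`
for every continuous linear functional `f`. -/
def WUCSeries {X : Type*} [NormedAddCommGroup X] [NormedSpace ℝ X] (x : ℕ → X) : Prop :=
  ∀ f : X →L[ℝ] ℝ, Summable fun i => |f (x i)|

/-- The `N_θ`-summability space of the series `∑ x i`, viewed as a subset of `ℓ∞`
(with the supremum norm): bounded scalar sequences `a` for which the partial sums of
`∑ a i • x i` are `N_θ`-summable to some element of `X`. -/
def NthetaSummabilitySpace {X : Type*} [NormedAddCommGroup X] [NormedSpace ℝ X]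
    (θ : ℕ → ℕ) (x : ℕ → X) : Set (lp (fun _ : ℕ => ℝ) ⊤) :=
  {a | ∃ L : X, NthetaSummable θ (fun n => ∑ i ∈ Finset.range n, a i • x i) L}

/-!
A wuC series satisfies `‖∑ i < n, a i • x i‖ ≤ H * ‖a‖∞` (uniform boundedness, applied in the
bidual), so `a ↦ (∑ i < n, a i • x i)ₙ` maps `ℓ∞`-convergent sequences to uniformly convergent
ones. `N_θ`-summability survives uniform limits, hence `S_{N_θ}` is closed in `ℓ∞`, i.e. complete.
A closed `S_{N_θ}` contains the finitely supported sequences and therefore their closure `c₀`.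
Finally, if `∑ |f (x i)| = ∞` for some `f`, Abel–Dini gives a null sequence `a` with
`f (∑ i < n, a i • x i) → ∞`; but an `N_θ`-summable sequence has a subsequence converging to its
limit (in each block pick a term below the block average), a contradiction.
-/

open Topology

section BlockAverage

variable {θ : ℕ → ℕ}

noncomputable def blockAvg (θ : ℕ → ℕ) (t : ℕ → ℝ) (r : ℕ) : ℝ :=
  (1 / (θ (r + 1) - θ r : ℝ)) * ∑ k ∈ Ioc (θ r) (θ (r + 1)), t k

lemma blockLength_pos (hθ : StrictMono θ) (r : ℕ) : (0 : ℝ) < θ (r + 1) - θ r :=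
  sub_pos.2 (Nat.cast_lt.2 (hθ r.lt_succ_self))

lemma blockAvg_const (hθ : StrictMono θ) (c : ℝ) (r : ℕ) : blockAvg θ (fun _ => c) r = c := by
  rw [blockAvg, sum_const, Nat.card_Ioc, nsmul_eq_mul, Nat.cast_sub (hθ r.lt_succ_self).le]
  field_simp [(blockLength_pos hθ r).ne']

lemma blockAvg_add (t s : ℕ → ℝ) (r : ℕ) :
    blockAvg θ (fun k => t k + s k) r = blockAvg θ t r + blockAvg θ s r := by
  simp only [blockAvg, sum_add_distrib, mul_add]

lemma blockAvg_nonneg (hθ : StrictMono θ) {t : ℕ → ℝ} (ht : ∀ k, 0 ≤ t k) (r : ℕ) :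
    0 ≤ blockAvg θ t r :=
  mul_nonneg (one_div_nonneg.2 (blockLength_pos hθ r).le) (sum_nonneg fun k _ => ht k)

lemma blockAvg_le_add (hθ : StrictMono θ) {t s : ℕ → ℝ} {c : ℝ} {r : ℕ}
    (h : ∀ k ∈ Ioc (θ r) (θ (r + 1)), t k ≤ s k + c) : blockAvg θ t r ≤ blockAvg θ s r + c :=
  calc blockAvg θ t r ≤ blockAvg θ (fun k => s k + c) r :=
        mul_le_mul_of_nonneg_left (sum_le_sum h) (one_div_nonneg.2 (blockLength_pos hθ r).le)
    _ = blockAvg θ s r + c := by rw [blockAvg_add, blockAvg_const hθ]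

lemma exists_le_blockAvg (hθ : StrictMono θ) (t : ℕ → ℝ) (r : ℕ) :
    ∃ k ∈ Ioc (θ r) (θ (r + 1)), t k ≤ blockAvg θ t r := by
  refine exists_le_of_sum_le (nonempty_Ioc.2 (hθ r.lt_succ_self)) ?_
  rw [sum_const, Nat.card_Ioc, nsmul_eq_mul, Nat.cast_sub (hθ r.lt_succ_self).le, blockAvg]
  field_simp [(blockLength_pos hθ r).ne']
  rfl

lemma tendsto_zero_of_forall_eventually_le {α : Type*} {l : Filter α} {s : α → ℝ}
    (hs : ∀ r, 0 ≤ s r) (h : ∀ ε > 0, ∀ᶠ r in l, s r ≤ ε) : Tendsto s l (𝓝 0) :=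
  tendsto_order.2 ⟨fun _ ha => .of_forall fun r => ha.trans_le (hs r),
    fun _ ha => (h _ (half_pos ha)).mono fun _ hr => hr.trans_lt (half_lt_self ha)⟩

lemma tendsto_blockAvg_zero (hθ : StrictMono θ) {t : ℕ → ℝ} (ht0 : ∀ k, 0 ≤ t k)
    (ht : Tendsto t atTop (𝓝 0)) : Tendsto (blockAvg θ t) atTop (𝓝 0) := by
  refine tendsto_zero_of_forall_eventually_le (blockAvg_nonneg hθ ht0) fun ε hε => ?_
  obtain ⟨N, hN⟩ := eventually_atTop.1 ((tendsto_order.1 ht).2 ε hε)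
  refine eventually_atTop.2 ⟨N, fun r hr => ?_⟩
  have hle := blockAvg_le_add (s := fun _ => 0) (c := ε) hθ fun k hk =>
    by simpa using (hN k (hr.trans ((hθ.id_le r).trans (mem_Ioc.1 hk).1.le))).le
  rwa [blockAvg_const hθ, zero_add] at hle

end BlockAverage

section NthetaSummable

variable {X : Type*} [NormedAddCommGroup X] {θ : ℕ → ℕ} {y : ℕ → X} {L : X}

lemma nthetaSummable_iff_tendsto_blockAvg_dist :
    NthetaSummable θ y L ↔ Tendsto (blockAvg θ fun k => dist (y k) L) atTop (𝓝 0) := by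
  simp only [dist_eq_norm]; rfl

lemma NthetaSummable.of_tendsto (hθ : StrictMono θ) (h : Tendsto y atTop (𝓝 L)) :
    NthetaSummable θ y L :=
  nthetaSummable_iff_tendsto_blockAvg_dist.2 <|
    tendsto_blockAvg_zero hθ (fun _ => dist_nonneg) (tendsto_iff_dist_tendsto_zero.1 h)

lemma NthetaSummable.exists_tendsto_comp (hθ : StrictMono θ) (h : NthetaSummable θ y L) :
    ∃ K : ℕ → ℕ, Tendsto K atTop atTop ∧ Tendsto (y ∘ K) atTop (𝓝 L) := by
  choose K hK hKle using exists_le_blockAvg hθ fun k => dist (y k) L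
  refine ⟨K, tendsto_atTop_mono (fun r => (hθ.id_le r).trans (mem_Ioc.1 (hK r)).1.le) tendsto_id,
    tendsto_iff_dist_tendsto_zero.2 ?_⟩
  exact squeeze_zero (fun _ => dist_nonneg) hKle (nthetaSummable_iff_tendsto_blockAvg_dist.1 h)

lemma NthetaSummable.dist_le (hθ : StrictMono θ) {z : ℕ → X} {M : X} {δ : ℝ}
    (hy : NthetaSummable θ y L) (hz : NthetaSummable θ z M) (h : ∀ k, dist (y k) (z k) ≤ δ) :
    dist L M ≤ δ := by
  rw [nthetaSummable_iff_tendsto_blockAvg_dist] at hy hz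
  have key : ∀ r, dist L M ≤ blockAvg θ (fun k => dist (y k) L + dist (z k) M) r + δ := by
    intro r
    rw [← blockAvg_const hθ (dist L M) r]
    refine blockAvg_le_add hθ fun k _ => ?_
    have := dist_triangle4 L (y k) (z k) M
    rw [dist_comm L (y k)] at this
    linarith [h k]
  have hlim := (hy.add hz).add_const δ
  simp only [← blockAvg_add, zero_add] at hlim
  exact ge_of_tendsto' hlim key

lemma NthetaSummable.exists_of_tendstoUniformly [CompleteSpace X] (hθ : StrictMono θ)
    {F : ℕ → ℕ → X} {L : ℕ → X} (hF : ∀ n, NthetaSummable θ (F n) (L n))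
    (hFy : TendstoUniformly F y atTop) : ∃ M, NthetaSummable θ y M := by
  have hL : CauchySeq L := by
    refine Metric.cauchySeq_iff'.2 fun ε hε => ?_
    obtain ⟨N, hN⟩ :=
      eventually_atTop.1 (Metric.tendstoUniformly_iff.1 hFy (ε / 3) (by positivity))
    refine ⟨N, fun n hn => ?_⟩
    refine ((hF n).dist_le hθ (hF N) fun k => ?_).trans_lt (by linarith : 2 * (ε / 3) < ε)
    linarith [dist_triangle_left (F n k) (F N k) (y k), hN n hn k, hN N le_rfl k]
  obtain ⟨M, hM⟩ := cauchySeq_tendsto_of_complete hL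
  refine ⟨M, nthetaSummable_iff_tendsto_blockAvg_dist.2 <|
    tendsto_zero_of_forall_eventually_le (blockAvg_nonneg hθ fun _ => dist_nonneg) fun ε hε => ?_⟩
  obtain ⟨n, hFn, hLn⟩ := ((Metric.tendstoUniformly_iff.1 hFy (ε / 3) (by positivity)).and
    (Metric.tendsto_nhds.1 hM (ε / 3) (by positivity))).exists
  filter_upwards [(tendsto_order.1 (nthetaSummable_iff_tendsto_blockAvg_dist.1 (hF n))).2
    (ε / 3) (by positivity)] with r hr
  have hle : blockAvg θ (fun k => dist (y k) M) r ≤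
      blockAvg θ (fun k => dist (F n k) (L n)) r + 2 * (ε / 3) :=
    blockAvg_le_add hθ fun k _ => by
      linarith [dist_triangle4 (y k) (F n k) (L n) M, hFn k]
  linarith

end NthetaSummable

lemma sqrt_sub_sqrt_le_sub_div_sqrt {p q : ℝ} (hp : 0 ≤ p) (hpq : p ≤ q) (hq : 0 < q) :
    √q - √p ≤ (q - p) / √q := by
  have hsq : 0 < √q := Real.sqrt_pos.2 hq
  rw [le_div_iff₀ hsq, sub_mul, Real.mul_self_sqrt hq.le]
  have : √p * √p ≤ √p * √q :=
    mul_le_mul_of_nonneg_left (Real.sqrt_le_sqrt hpq) (Real.sqrt_nonneg p)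
  rw [Real.mul_self_sqrt hp] at this
  linarith

/-- Abel–Dini: a divergent series of nonnegative terms still diverges after multiplication by
the null sequence `1 / √(1 + T (i + 1))`, `T` being its partial sums. -/
lemma exists_tendsto_zero_tendsto_sum_mul_atTop {u : ℕ → ℝ} (hu : ∀ i, 0 ≤ u i)
    (h : ¬Summable u) : ∃ c : ℕ → ℝ, Tendsto c atTop (𝓝 0) ∧
      Tendsto (fun n => ∑ i ∈ range n, c i * u i) atTop atTop := by
  set T : ℕ → ℝ := fun n => ∑ i ∈ range n, u i
  have hT : Tendsto T atTop atTop := (not_summable_iff_tendsto_nat_atTop_of_nonneg hu).1 h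
  have hT0 : ∀ n, 0 ≤ T n := fun n => sum_nonneg fun i _ => hu i
  have hsqrt : Tendsto (fun n => √(1 + T n)) atTop atTop :=
    Real.tendsto_sqrt_atTop.comp (tendsto_atTop_add_const_left _ 1 hT)
  refine ⟨fun i => 1 / √(1 + T (i + 1)), ?_, ?_⟩
  · simpa [Function.comp_def] using
      (tendsto_inv_atTop_zero.comp hsqrt).comp (tendsto_add_atTop_nat 1)
  · refine tendsto_atTop_mono (fun n => ?_) (tendsto_atTop_add_const_right _ (-1) hsqrt)
    calc √(1 + T n) + -1 = ∑ i ∈ range n, (√(1 + T (i + 1)) - √(1 + T i)) := by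
          rw [sum_range_sub (fun i => √(1 + T i))]
          simp [T, sub_eq_add_neg]
      _ ≤ ∑ i ∈ range n, 1 / √(1 + T (i + 1)) * u i := by
          refine sum_le_sum fun i _ => ?_
          have hTi : (1 + T (i + 1)) - (1 + T i) = u i := by
            rw [show T (i + 1) = T i + u i from sum_range_succ _ _]; ring
          have := sqrt_sub_sqrt_le_sub_div_sqrt (p := 1 + T i) (q := 1 + T (i + 1))
            (by linarith [hT0 i]) (by linarith [hu i]) (by linarith [hT0 (i + 1)])
          rwa [hTi, div_eq_mul_one_div, mul_comm] at this

section WUC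

variable {X : Type*} [NormedAddCommGroup X] [NormedSpace ℝ X] {x : ℕ → X}

/-- The uniform boundedness principle applied to the functionals `f ↦ ∑ i < n, a i * f (x i)`
on the dual of `X`. -/
lemma WUCSeries.exists_norm_sum_smul_le_of_abs_le_one (hx : WUCSeries x) :
    ∃ H, ∀ a : ℕ → ℝ, (∀ i, |a i| ≤ 1) → ∀ n, ‖∑ i ∈ range n, a i • x i‖ ≤ H := by
  let g : ℕ × {a : ℕ → ℝ // ∀ i, |a i| ≤ 1} → StrongDual ℝ (StrongDual ℝ X) :=
    fun p => NormedSpace.inclusionInDoubleDualLi ℝ (∑ i ∈ range p.1, p.2.1 i • x i)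
  have hg : ∀ p f, g p f = ∑ i ∈ range p.1, p.2.1 i * f (x i) := by
    intro p f
    simp [g, NormedSpace.inclusionInDoubleDualLi, NormedSpace.dual_def, map_sum, map_smul]
  obtain ⟨H, hH⟩ := banach_steinhaus (g := g) fun f => ⟨∑' i, |f (x i)|, fun p => by
    rw [hg, Real.norm_eq_abs]
    calc |∑ i ∈ range p.1, p.2.1 i * f (x i)| ≤ ∑ i ∈ range p.1, |p.2.1 i * f (x i)| :=
          abs_sum_le_sum_abs _ _
      _ ≤ ∑ i ∈ range p.1, |f (x i)| := sum_le_sum fun i _ => by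
          rw [abs_mul]; exact mul_le_of_le_one_left (abs_nonneg _) (p.2.2 i)
      _ ≤ ∑' i, |f (x i)| := (hx f).sum_le_tsum _ fun i _ => abs_nonneg _⟩
  exact ⟨H, fun a ha n => by simpa [g, LinearIsometry.norm_map] using hH (n, ⟨a, ha⟩)⟩

lemma WUCSeries.exists_dist_sum_smul_le (hx : WUCSeries x) :
    ∃ H, ∀ (a b : ℕ → ℝ) (C : ℝ), (∀ i, |a i - b i| ≤ C) →
      ∀ n, dist (∑ i ∈ range n, a i • x i) (∑ i ∈ range n, b i • x i) ≤ H * C := by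
  obtain ⟨H, hH⟩ := hx.exists_norm_sum_smul_le_of_abs_le_one
  refine ⟨H, fun a b C hC n => ?_⟩
  rw [dist_eq_norm, ← sum_sub_distrib]
  simp_rw [← sub_smul]
  rcases (abs_nonneg _).trans (hC 0) |>.eq_or_lt with rfl | hCpos
  · have hab : ∀ i, a i - b i = 0 := fun i => abs_nonpos_iff.1 (hC i)
    simp [hab]
  · have hscale : ∑ i ∈ range n, (a i - b i) • x i =
        C • ∑ i ∈ range n, ((a i - b i) / C) • x i := by
      simp_rw [smul_sum, smul_smul, mul_div_cancel₀ _ hCpos.ne']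
    rw [hscale, norm_smul, Real.norm_of_nonneg hCpos.le, mul_comm]
    refine mul_le_mul_of_nonneg_right (hH _ (fun i => ?_) n) hCpos.le
    rw [abs_div, abs_of_pos hCpos, div_le_one hCpos]
    exact hC i

end WUC

lemma sum_range_ite_lt_smul_of_le {R M : Type*} [Semiring R] [AddCommMonoid M] [Module R M]
    (a : ℕ → R) (x : ℕ → M) {m n : ℕ} (h : m ≤ n) :
    ∑ i ∈ range n, (if i < m then a i else 0) • x i = ∑ i ∈ range m, a i • x i := by
  rw [← sum_range_add_sum_Ico _ h, ← add_zero (∑ i ∈ range m, a i • x i)]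
  congr 1
  · exact sum_congr rfl fun i hi => by rw [if_pos (mem_range.1 hi)]
  · exact sum_eq_zero fun i hi => by rw [if_neg (mem_Ico.1 hi).1.not_gt, zero_smul]

lemma lp.norm_apply_sub_apply_le_dist {α : Type*} {E : α → Type*}
    [∀ i, NormedAddCommGroup (E i)] {p : ENNReal} [Fact (1 ≤ p)] (hp : p ≠ 0) (a b : lp E p)
    (i : α) : ‖a i - b i‖ ≤ dist a b := by
  simpa [dist_eq_norm] using lp.norm_apply_le_norm hp (a - b) i

section SummabilitySpace

variable {X : Type*} [NormedAddCommGroup X] [NormedSpace ℝ X] {θ : ℕ → ℕ} {x : ℕ → X}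

theorem WUCSeries.isClosed_nthetaSummabilitySpace [CompleteSpace X] (hθ : StrictMono θ)
    (hx : WUCSeries x) : IsClosed (NthetaSummabilitySpace θ x) := by
  obtain ⟨H, hH⟩ := hx.exists_dist_sum_smul_le
  refine isClosed_of_closure_subset fun A hA => ?_
  obtain ⟨b, hbS, hbA⟩ := mem_closure_iff_seq_limit.1 hA
  choose L hL using hbS
  refine NthetaSummable.exists_of_tendstoUniformly hθ hL
    (Metric.tendstoUniformly_iff.2 fun ε hε => ?_)
  have hlim : Tendsto (fun n => H * dist (b n) A) atTop (𝓝 0) := by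
    simpa using (tendsto_iff_dist_tendsto_zero.1 hbA).const_mul H
  filter_upwards [(tendsto_order.1 hlim).2 ε hε] with n hn k
  rw [dist_comm]
  refine (hH _ _ _ (fun i => ?_) k).trans_lt hn
  simpa only [Real.norm_eq_abs] using lp.norm_apply_sub_apply_le_dist ENNReal.top_ne_zero (b n) A i

/-- The truncations of a null sequence lie in the summability space and converge to it in `ℓ∞`. -/
theorem exists_nthetaSummable_of_isClosed (hθ : StrictMono θ)
    (hS : IsClosed (NthetaSummabilitySpace θ x)) {a : ℕ → ℝ} (ha : Tendsto a atTop (𝓝 0)) :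
    ∃ L, NthetaSummable θ (fun n => ∑ i ∈ range n, a i • x i) L := by
  let A : lp (fun _ : ℕ => ℝ) ⊤ := ⟨a, memℓp_infty ha.norm.bddAbove_range⟩
  have hmem (m : ℕ) : Memℓp (fun i => if i < m then a i else 0) ⊤ :=
    (memℓp_zero ((Set.finite_lt_nat m).subset fun i hi => by
      by_contra him; exact hi (if_neg him))).of_exponent_ge le_top
  let T (m : ℕ) : lp (fun _ : ℕ => ℝ) ⊤ := ⟨_, hmem m⟩
  have hTS (m : ℕ) : T m ∈ NthetaSummabilitySpace θ x :=
    ⟨_, .of_tendsto hθ (tendsto_atTop_of_eventually_const fun n hn =>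
      sum_range_ite_lt_smul_of_le a x hn)⟩
  have hTA : Tendsto T atTop (𝓝 A) := by
    refine tendsto_iff_dist_tendsto_zero.2 <|
      tendsto_zero_of_forall_eventually_le (fun _ => dist_nonneg) fun ε hε => ?_
    obtain ⟨N, hN⟩ := eventually_atTop.1 ((tendsto_order.1 ha.norm).2 ε (by simpa using hε))
    refine eventually_atTop.2 ⟨N, fun m hm => ?_⟩
    rw [dist_eq_norm]
    refine lp.norm_le_of_forall_le hε.le fun i => ?_
    change ‖(if i < m then a i else 0) - a i‖ ≤ ε
    split_ifs with him
    · simpa using hε.le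
    · simpa using (hN i (hm.trans (not_lt.1 him))).le
  obtain ⟨L, hL⟩ := hS.mem_of_tendsto hTA (.of_forall hTS)
  exact ⟨L, hL⟩

theorem WUCSeries.of_forall_exists_nthetaSummable (hθ : StrictMono θ)
    (h : ∀ a : ℕ → ℝ, Tendsto a atTop (𝓝 0) →
      ∃ L, NthetaSummable θ (fun n => ∑ i ∈ range n, a i • x i) L) :
    WUCSeries x := by
  intro f
  by_contra hf
  obtain ⟨c, hc0, hc⟩ :=
    exists_tendsto_zero_tendsto_sum_mul_atTop (fun i => abs_nonneg (f (x i))) hf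
  let a (i : ℕ) : ℝ := c i * SignType.sign (f (x i))
  have ha : Tendsto a atTop (𝓝 0) := by
    refine squeeze_zero_norm (fun i => ?_) (by simpa using hc0.norm)
    rw [norm_mul]
    refine mul_le_of_le_one_right (norm_nonneg _) ?_
    rw [Real.norm_eq_abs]
    cases SignType.sign (f (x i)) <;> simp
  have hfa (n : ℕ) : f (∑ i ∈ range n, a i • x i) = ∑ i ∈ range n, c i * |f (x i)| := by
    simp [a, map_sum, mul_assoc]
  obtain ⟨L, hL⟩ := h a ha
  obtain ⟨K, hK, hyK⟩ := hL.exists_tendsto_comp hθ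
  exact not_tendsto_atTop_of_tendsto_nhds ((f.continuous.tendsto L).comp hyK)
    (by simpa [Function.comp_def, hfa] using hc.comp hK)

end SummabilitySpace

/-- Characterization of wuC series via the `N_θ`-summability space. -/
theorem wuc_iff_nthetaSummabilitySpace_complete {X : Type*} [NormedAddCommGroup X]
    [NormedSpace ℝ X] [CompleteSpace X] (θ : ℕ → ℕ) (hθ : IsLacunary θ) (x : ℕ → X) :
    (WUCSeries x ↔ IsComplete (NthetaSummabilitySpace θ x)) ∧
    (WUCSeries x ↔ ∀ a : ℕ → ℝ, Tendsto a atTop (nhds 0) →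
      ∃ L : X, NthetaSummable θ (fun n => ∑ i ∈ Finset.range n, a i • x i) L) := by
  have hmono : StrictMono θ := hθ.2.1
  have wuc_complete (hx : WUCSeries x) : IsComplete (NthetaSummabilitySpace θ x) :=
    (hx.isClosed_nthetaSummabilitySpace hmono).isComplete
  have complete_c0 (hS : IsComplete (NthetaSummabilitySpace θ x)) {a : ℕ → ℝ}
      (ha : Tendsto a atTop (nhds 0)) :=
    exists_nthetaSummable_of_isClosed hmono hS.isClosed ha
  have c0_wuc := WUCSeries.of_forall_exists_nthetaSummable (x := x) hmono
  exact ⟨⟨wuc_complete, fun hS => c0_wuc fun _ => complete_c0 hS⟩,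
    ⟨fun hx _ => complete_c0 (wuc_complete hx), c0_wuc⟩⟩
end

section
/- Let X be a real normed vector space and θ = (k_r) a lacunary sequence. Then X is complete (i.e. a Banach space) if and only if for every weakly unconditionally Cauchy series ∑ x_i in X, the space S_{S_θ}(∑ x_i) = {(a_i) ∈ ℓ_∞ : the partial sums of ∑ a_i x_i are S_θ-summable}, endowed with the supremum norm, is complete. -/
open Filter Finset
open scoped Classical

/-- The `S_θ`-summability space of the series `∑ x i`, viewed as a subset of `ℓ∞`
(with the supremum norm): bounded scalar sequences `a` for which the partial sums of
`∑ a i • x i` are `S_θ`-convergent to some element of `X`. -/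
def SthetaSummabilitySpace {X : Type*} [NormedAddCommGroup X] [NormedSpace ℝ X]
    (θ : ℕ → ℕ) (x : ℕ → X) : Set (lp (fun _ : ℕ => ℝ) ⊤) :=
  {a | ∃ L : X, SthetaConvergent θ (fun n => ∑ i ∈ Finset.range n, a i • x i) L}

/-!
The partial-sum operators `a ↦ ∑_{i<n} a i • x i` of a wuC series are uniformly bounded on `ℓ∞`
(Banach–Steinhaus, once in the bidual to pass from weak to norm boundedness, once on `ℓ∞`). So
if `X` is complete, `ℓ∞`-convergence of coefficients gives uniform convergence of partial sums,
and `S_θ`-summability survives uniform limits: two `S_θ`-convergent sequences are simultaneously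
close to their limits at infinitely many indices, which makes the limits Cauchy.

Conversely, for `u` with `‖u (i + 1) - u i‖ < 4⁻ⁱ` the terms `xᵢ = 2ⁱ • (u (i + 1) - u i)` are
absolutely summable, and the null sequence `2⁻ⁱ` is an `ℓ∞`-limit of its truncations, which lie in
the closed summability space. The partial sums of `∑ 2⁻ⁱ • xᵢ` are `u n - u 0`, and an
`S_θ`-convergent Cauchy sequence converges.
-/

open scoped Topology lp ENNReal

def HasLacunaryDensityZero (θ : ℕ → ℕ) (p : ℕ → Prop) [DecidablePred p] : Prop :=
  Tendsto (fun r => (1 / (θ (r + 1) - θ r : ℝ)) * (((Ioc (θ r) (θ (r + 1))).filter p).card : ℝ))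
    atTop (𝓝 0)

lemma one_div_lacunaryLength_nonneg {θ : ℕ → ℕ} (hθ : Monotone θ) (r : ℕ) :
    0 ≤ 1 / (θ (r + 1) - θ r : ℝ) :=
  one_div_nonneg.2 (sub_nonneg.2 (by exact_mod_cast hθ r.le_succ))

namespace HasLacunaryDensityZero

variable {θ : ℕ → ℕ} {p q : ℕ → Prop} [DecidablePred p] [DecidablePred q]

lemma mono (hθ : Monotone θ) (hq : HasLacunaryDensityZero θ q) (hpq : ∀ k, p k → q k) :
    HasLacunaryDensityZero θ p :=
  squeeze_zero (fun r => mul_nonneg (one_div_lacunaryLength_nonneg hθ r) (Nat.cast_nonneg _))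
    (fun r => mul_le_mul_of_nonneg_left
      (Nat.cast_le.2 (card_le_card (monotone_filter_right _ fun k _ => hpq k)))
      (one_div_lacunaryLength_nonneg hθ r))
    hq

lemma or (hθ : Monotone θ) (hp : HasLacunaryDensityZero θ p) (hq : HasLacunaryDensityZero θ q) :
    HasLacunaryDensityZero θ (fun k => p k ∨ q k) := by
  refine squeeze_zero
    (fun r => mul_nonneg (one_div_lacunaryLength_nonneg hθ r) (Nat.cast_nonneg _)) (fun r => ?_)
    (by simpa only [add_zero] using hp.add hq)
  rw [← mul_add, filter_or, ← Nat.cast_add]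
  exact mul_le_mul_of_nonneg_left (Nat.cast_le.2 (card_union_le (α := ℕ) _ _))
    (one_div_lacunaryLength_nonneg hθ r)

lemma of_eventually_not (hθ : StrictMono θ) (h : ∀ᶠ k in atTop, ¬ p k) :
    HasLacunaryDensityZero θ p := by
  obtain ⟨N, hN⟩ := eventually_atTop.1 h
  refine tendsto_const_nhds.congr' ?_
  filter_upwards [eventually_ge_atTop N] with r hr
  have : (Ioc (θ r) (θ (r + 1))).filter p = ∅ :=
    filter_eq_empty_iff.2 fun k hk => hN k ((hr.trans (hθ.id_le r)).trans (mem_Ioc.1 hk).1.le)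
  simp [this]

lemma frequently_not (hθ : StrictMono θ) (hp : HasLacunaryDensityZero θ p) :
    ∃ᶠ k in atTop, ¬ p k := by
  refine frequently_atTop.2 fun N => ?_
  obtain ⟨r, hr, hNr⟩ := ((hp.eventually (gt_mem_nhds one_pos)).and (eventually_ge_atTop N)).exists
  have hlen : (0 : ℝ) < θ (r + 1) - θ r := sub_pos.2 (by exact_mod_cast hθ r.lt_succ_self)
  have hcard : ((Ioc (θ r) (θ (r + 1))).filter p).card < (Ioc (θ r) (θ (r + 1))).card := by
    rw [one_div_mul_eq_div, div_lt_one hlen] at hr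
    rw [Nat.card_Ioc, ← Nat.cast_lt (α := ℝ), Nat.cast_sub (hθ r.lt_succ_self).le]
    exact hr
  obtain ⟨k, hk, hpk⟩ : ∃ k ∈ Ioc (θ r) (θ (r + 1)), ¬ p k := by
    simpa only [not_forall, exists_prop] using mt card_filter_eq_iff.2 hcard.ne
  exact ⟨k, (hNr.trans (hθ.id_le r)).trans (mem_Ioc.1 hk).1.le, hpk⟩

end HasLacunaryDensityZero

namespace SthetaConvergent

variable {X : Type*} [NormedAddCommGroup X] {θ : ℕ → ℕ} {x y : ℕ → X} {L M : X}

lemma of_tendsto (hθ : StrictMono θ) (hx : Tendsto x atTop (𝓝 L)) : SthetaConvergent θ x L :=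
  fun ε hε => HasLacunaryDensityZero.of_eventually_not hθ <| by
    simpa only [not_le, ← dist_eq_norm] using Metric.tendsto_nhds.1 hx ε hε

lemma frequently_dist_lt (hθ : StrictMono θ) (hx : SthetaConvergent θ x L)
    (hy : SthetaConvergent θ y M) {ε : ℝ} (hε : 0 < ε) :
    ∃ᶠ k in atTop, dist (x k) L < ε ∧ dist (y k) M < ε := by
  simpa only [not_or, not_le, dist_eq_norm] using
    (HasLacunaryDensityZero.or hθ.monotone (hx ε hε) (hy ε hε)).frequently_not hθ

lemma tendsto_of_cauchySeq (hθ : StrictMono θ) (hx : SthetaConvergent θ x L)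
    (hc : CauchySeq x) : Tendsto x atTop (𝓝 L) := by
  refine Metric.tendsto_atTop.2 fun ε hε => ?_
  obtain ⟨N, hN⟩ := Metric.cauchySeq_iff.1 hc (ε / 2) (half_pos hε)
  obtain ⟨k, hNk, hk, -⟩ := (frequently_dist_lt hθ hx hx (half_pos hε)).forall_exists_of_atTop N
  refine ⟨N, fun n hn => ?_⟩
  calc dist (x n) L ≤ dist (x n) (x k) + dist (x k) L := dist_triangle _ _ _
    _ < ε := by linarith [hN n hn k hNk]

section UniformLimit

variable {y : ℕ → ℕ → X} {Y : ℕ → X} {Ls : ℕ → X}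

lemma cauchySeq_of_tendstoUniformly (hθ : StrictMono θ)
    (hy : ∀ n, SthetaConvergent θ (y n) (Ls n)) (hyY : TendstoUniformly y Y atTop) :
    CauchySeq Ls := by
  refine Metric.cauchySeq_iff'.2 fun ε hε => ?_
  obtain ⟨N, hN⟩ := eventually_atTop.1 (Metric.tendstoUniformly_iff.1 hyY (ε / 4) (by positivity))
  refine ⟨N, fun n hn => ?_⟩
  obtain ⟨k, hkn, hkN⟩ := (frequently_dist_lt hθ (hy n) (hy N) (by positivity : 0 < ε / 4)).exists
  calc dist (Ls n) (Ls N)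
      ≤ dist (Ls n) (y n k) + (dist (y n k) (Y k) + dist (Y k) (y N k)) + dist (y N k) (Ls N) :=
        (dist_triangle4 _ _ _ _).trans (by gcongr; exact dist_triangle _ _ _)
    _ < ε := by
      linarith [dist_comm (Ls n) (y n k), dist_comm (y n k) (Y k), hN n hn k, hN N le_rfl k]

lemma of_tendstoUniformly (hθ : StrictMono θ) (hy : ∀ n, SthetaConvergent θ (y n) (Ls n))
    (hyY : TendstoUniformly y Y atTop) (hL : Tendsto Ls atTop (𝓝 L)) :
    SthetaConvergent θ Y L := by
  intro ε hε
  obtain ⟨n, hYn, hLn⟩ := ((Metric.tendstoUniformly_iff.1 hyY (ε / 4) (by positivity)).and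
    (Metric.tendsto_nhds.1 hL (ε / 4) (by positivity))).exists
  refine HasLacunaryDensityZero.mono hθ.monotone (hy n (ε / 2) (by positivity)) fun k hk => ?_
  rw [← dist_eq_norm] at hk ⊢
  linarith [dist_triangle4 (Y k) (y n k) (Ls n) L, hYn k]

theorem exists_of_tendstoUniformly [CompleteSpace X] (hθ : StrictMono θ)
    (hy : ∀ n, SthetaConvergent θ (y n) (Ls n)) (hyY : TendstoUniformly y Y atTop) :
    ∃ L, SthetaConvergent θ Y L :=
  have ⟨L, hL⟩ := cauchySeq_tendsto_of_complete (cauchySeq_of_tendstoUniformly hθ hy hyY)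
  ⟨L, of_tendstoUniformly hθ hy hyY hL⟩

end UniformLimit

end SthetaConvergent

lemma exists_norm_le_of_forall_exists_norm_dual_le {ι 𝕜 E : Type*} [RCLike 𝕜]
    [NormedAddCommGroup E] [NormedSpace 𝕜 E] (v : ι → E)
    (h : ∀ f : StrongDual 𝕜 E, ∃ C, ∀ i, ‖f (v i)‖ ≤ C) : ∃ C, ∀ i, ‖v i‖ ≤ C := by
  obtain ⟨C, hC⟩ :=
    banach_steinhaus (g := fun i => NormedSpace.inclusionInDoubleDual 𝕜 E (v i)) h
  exact ⟨C, fun i =>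
    ((NormedSpace.inclusionInDoubleDualLi 𝕜).norm_map (v i)).symm.trans_le (hC i)⟩

section PartialSums

variable {X : Type*} [NormedAddCommGroup X] [NormedSpace ℝ X]

noncomputable def partialSumCLM (x : ℕ → X) (n : ℕ) : ℓ^∞(ℕ, ℝ) →L[ℝ] X :=
  ∑ i ∈ range n, (lp.evalCLM ℝ (fun _ : ℕ => ℝ) ∞ i).smulRight (x i)

@[simp]
lemma partialSumCLM_apply (x : ℕ → X) (n : ℕ) (a : ℓ^∞(ℕ, ℝ)) :
    partialSumCLM x n a = ∑ i ∈ range n, a i • x i := by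
  simp [partialSumCLM, lp.evalCLM]

lemma WUCSeries.exists_norm_partialSumCLM_le {x : ℕ → X} (hx : WUCSeries x) :
    ∃ C, ∀ n, ‖partialSumCLM x n‖ ≤ C := by
  refine banach_steinhaus fun a => exists_norm_le_of_forall_exists_norm_dual_le _ fun f =>
    ⟨‖a‖ * ∑' i, |f (x i)|, fun n => ?_⟩
  calc ‖f (partialSumCLM x n a)‖ = |∑ i ∈ range n, a i * f (x i)| := by simp
    _ ≤ ∑ i ∈ range n, ‖a‖ * |f (x i)| := by
      refine (abs_sum_le_sum_abs _ _).trans (sum_le_sum fun i _ => ?_)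
      rw [abs_mul]
      gcongr
      exact lp.norm_apply_le_norm ENNReal.top_ne_zero a i
    _ ≤ ‖a‖ * ∑' i, |f (x i)| := by
      rw [← mul_sum]
      gcongr
      exact (hx f).sum_le_tsum _ fun i _ => abs_nonneg _

end PartialSums

lemma ContinuousLinearMap.tendstoUniformly_apply_of_norm_le {ι E F : Type*}
    [SeminormedAddCommGroup E] [NormedSpace ℝ E] [SeminormedAddCommGroup F] [NormedSpace ℝ F]
    {T : ι → E →L[ℝ] F} {C : ℝ} (hT : ∀ i, ‖T i‖ ≤ C) {A : ℕ → E} {a : E}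
    (hA : Tendsto A atTop (𝓝 a)) :
    TendstoUniformly (fun n i => T i (A n)) (fun i => T i a) atTop := by
  have hC : Tendsto (fun n => C * ‖a - A n‖) atTop (𝓝 0) := by
    simpa using ((tendsto_iff_norm_sub_tendsto_zero.1 hA).const_mul C).congr fun n => by
      rw [norm_sub_rev]
  refine Metric.tendstoUniformly_iff.2 fun ε hε => ?_
  filter_upwards [hC.eventually (gt_mem_nhds hε)] with n hn i
  calc dist (T i a) (T i (A n)) = ‖T i (a - A n)‖ := by rw [dist_eq_norm, map_sub]
    _ ≤ ‖T i‖ * ‖a - A n‖ := (T i).le_opNorm _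
    _ ≤ C * ‖a - A n‖ := by gcongr; exact hT i
    _ < ε := hn

lemma lp.tendsto_sum_single_of_tendsto_zero {E : Type*} [NormedAddCommGroup E] (a : ℓ^∞(ℕ, E))
    (ha : Tendsto (fun i => a i) atTop (𝓝 0)) :
    Tendsto (fun n => ∑ i ∈ range n, lp.single ∞ i (a i)) atTop (𝓝 a) := by
  refine Metric.tendsto_atTop.2 fun ε hε => ?_
  obtain ⟨N, hN⟩ := Metric.tendsto_atTop.1 ha (ε / 2) (half_pos hε)
  refine ⟨N, fun n hn => ?_⟩
  rw [dist_eq_norm]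
  refine (lp.norm_le_of_forall_le (half_pos hε).le fun j => ?_).trans_lt (half_lt_self hε)
  simp only [lp.coeFn_sub, lp.coeFn_sum, lp.coeFn_single, Pi.sub_apply, Finset.sum_apply,
    Finset.sum_pi_single, mem_range]
  split_ifs with hj
  · simpa using (half_pos hε).le
  · simpa using (hN j (hn.trans (not_lt.1 hj))).le

section SummabilitySpace

variable {X : Type*} [NormedAddCommGroup X] [NormedSpace ℝ X] {θ : ℕ → ℕ} {x : ℕ → X}

lemma mem_sthetaSummabilitySpace_iff {a : ℓ^∞(ℕ, ℝ)} :
    a ∈ SthetaSummabilitySpace θ x ↔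
      ∃ L, SthetaConvergent θ (fun n => partialSumCLM x n a) L := by
  simp only [SthetaSummabilitySpace, Set.mem_ofPred_eq, partialSumCLM_apply]

theorem isClosed_sthetaSummabilitySpace [CompleteSpace X] (hθ : StrictMono θ)
    (hx : WUCSeries x) : IsClosed (SthetaSummabilitySpace θ x) := by
  obtain ⟨C, hC⟩ := hx.exists_norm_partialSumCLM_le
  refine IsSeqClosed.isClosed fun A a hA hAa => ?_
  simp only [mem_sthetaSummabilitySpace_iff] at hA ⊢
  choose L hL using hA
  exact SthetaConvergent.exists_of_tendstoUniformly hθ hL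
    (ContinuousLinearMap.tendstoUniformly_apply_of_norm_le hC hAa)

lemma sum_single_mem_sthetaSummabilitySpace (hθ : StrictMono θ) (b : ℕ → ℝ) (n : ℕ) :
    ∑ i ∈ range n, lp.single ∞ i (b i) ∈ SthetaSummabilitySpace θ x := by
  refine mem_sthetaSummabilitySpace_iff.2 ⟨_, SthetaConvergent.of_tendsto hθ
    (Tendsto.congr' ?_ (tendsto_const_nhds (x := ∑ i ∈ range n, b i • x i)))⟩
  filter_upwards [eventually_ge_atTop n] with k hk
  simp only [partialSumCLM_apply, lp.coeFn_sum, lp.coeFn_single, Finset.sum_apply,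
    Finset.sum_pi_single, ite_smul, zero_smul, Finset.sum_ite_mem,
    inter_eq_right.2 (range_subset_range.2 hk)]

lemma mem_sthetaSummabilitySpace_of_tendsto_zero (hθ : StrictMono θ)
    (hS : IsClosed (SthetaSummabilitySpace θ x)) (a : ℓ^∞(ℕ, ℝ))
    (ha : Tendsto (fun i => a i) atTop (𝓝 0)) : a ∈ SthetaSummabilitySpace θ x :=
  hS.mem_of_tendsto (lp.tendsto_sum_single_of_tendsto_zero a ha)
    (Eventually.of_forall (sum_single_mem_sthetaSummabilitySpace hθ _))

lemma WUCSeries.of_summable_norm (hx : Summable fun i => ‖x i‖) : WUCSeries x := fun f =>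
  (hx.mul_left ‖f‖).of_nonneg_of_le (fun _ => abs_nonneg _) fun i => f.le_opNorm (x i)

end SummabilitySpace

lemma memℓp_infty_one_half_pow : Memℓp (fun i : ℕ => (1 / 2 : ℝ) ^ i) ∞ :=
  memℓp_infty ⟨1, by
    rintro _ ⟨i, rfl⟩
    simpa [abs_of_pos] using pow_le_one₀ (by norm_num : (0 : ℝ) ≤ 1 / 2) (by norm_num) (n := i)⟩

theorem completeSpace_of_forall_isClosed_sthetaSummabilitySpace {X : Type*}
    [NormedAddCommGroup X] [NormedSpace ℝ X] {θ : ℕ → ℕ} (hθ : StrictMono θ)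
    (h : ∀ x : ℕ → X, WUCSeries x → IsClosed (SthetaSummabilitySpace θ x)) : CompleteSpace X := by
  refine Metric.complete_of_convergent_controlled_sequences (fun n => (1 / 4 : ℝ) ^ n)
    (fun n => by positivity) fun u hu => ?_
  have hstep : ∀ i, ‖u (i + 1) - u i‖ ≤ (1 / 4 : ℝ) ^ i := fun i => by
    simpa [dist_eq_norm] using (hu i (i + 1) i i.le_succ le_rfl).le
  set x : ℕ → X := fun i => (2 : ℝ) ^ i • (u (i + 1) - u i)
  have hx : WUCSeries x := by
    refine WUCSeries.of_summable_norm (summable_geometric_two.of_nonneg_of_le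
      (fun _ => norm_nonneg _) fun i => ?_)
    calc ‖x i‖ = 2 ^ i * ‖u (i + 1) - u i‖ := by simp [x, norm_smul]
      _ ≤ 2 ^ i * (1 / 4) ^ i := by gcongr; exact hstep i
      _ = (1 / 2) ^ i := by rw [← mul_pow]; norm_num
  obtain ⟨L, hL⟩ := mem_sthetaSummabilitySpace_of_tendsto_zero hθ (h x hx)
    ⟨_, memℓp_infty_one_half_pow⟩
    (tendsto_pow_atTop_nhds_zero_of_lt_one (by norm_num) (by norm_num))
  have htelescope : ∀ n, ∑ i ∈ range n, (1 / 2 : ℝ) ^ i • x i = u n - u 0 := fun n => by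
    rw [← sum_range_sub]
    refine sum_congr rfl fun i _ => ?_
    simp only [x, smul_smul, ← mul_pow]
    norm_num
  simp only [htelescope] at hL
  have hcauchy : CauchySeq fun n => u n - u 0 :=
    cauchySeq_of_le_geometric (1 / 4) 1 (by norm_num) fun n => by
      rw [dist_sub_right, dist_comm, dist_eq_norm, one_mul]
      exact hstep n
  exact ⟨L + u 0, by simpa using (hL.tendsto_of_cauchySeq hθ hcauchy).add_const (u 0)⟩

/-- A normed space is complete iff the `S_θ`-summability space of every wuC series is complete. -/
theorem completeSpace_iff_sthetaSummabilitySpace_complete {X : Type*} [NormedAddCommGroup X]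
    [NormedSpace ℝ X] (θ : ℕ → ℕ) (hθ : IsLacunary θ) :
    CompleteSpace X ↔
      ∀ x : ℕ → X, WUCSeries x → IsComplete (SthetaSummabilitySpace θ x) := by
  obtain ⟨-, hmono, -⟩ := hθ
  refine ⟨fun _ x hx => (isClosed_sthetaSummabilitySpace hmono hx).isComplete, fun h => ?_⟩
  exact completeSpace_of_forall_isClosed_sthetaSummabilitySpace hmono fun x hx => (h x hx).isClosed
end
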